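/- Let H and K be complex Hilbert spaces, let A, B : H → K be bounded linear operators, and let e_A denote the orthogonal projection of K onto the closure of the range of A. Suppose C : H → H is a nonzero bounded operator with dense range, and suppose the linear map Ψ defined on the subspace {A* ∘ x ∘ C : x ∈ B(K)} of B(H) by Ψ(A* ∘ x ∘ C) = B* ∘ x ∘ C is well defined and closable with respect to the weak operator topology. Then the closure of the range of B is contained in the closure of the range of A. -/

import Mathlib

open ContinuousLinearMap Filter Topology

/-! With `Q` the projection onto `(range A)ᗮ`, we have `Q A = 0`, hence `A* Q C = 0 = A* 0 C`.
Well-definedness of `Ψ` gives `B* Q C = 0`, so `B* Q = 0` as `C` has dense range, i.e. `Q B = 0`: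
the range of `B` lies in the closure of the range of `A`. -/

section

variable {𝕜 E F G : Type*} [RCLike 𝕜]
  [NormedAddCommGroup E] [InnerProductSpace 𝕜 E] [NormedAddCommGroup F] [InnerProductSpace 𝕜 F]

theorem Submodule.starProjection_orthogonal_comp_eq_zero_iff (S : Submodule 𝕜 F)
    [S.HasOrthogonalProjection] (T : E →L[𝕜] F) :
    Sᗮ.starProjection ∘L T = 0 ↔ LinearMap.range (T : E →ₗ[𝕜] F) ≤ S := by
  simp only [ContinuousLinearMap.ext_iff, comp_apply, zero_apply,
    Submodule.starProjection_apply_eq_zero_iff, Submodule.orthogonal_orthogonal,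
    LinearMap.range_le_iff_comap, Submodule.eq_top_iff', Submodule.mem_comap, coe_coe]

theorem ContinuousLinearMap.adjoint_comp_eq_zero_iff [CompleteSpace E] [CompleteSpace F]
    {P : F →L[𝕜] F} (hP : IsSelfAdjoint P) (T : E →L[𝕜] F) : adjoint T ∘L P = 0 ↔ P ∘L T = 0 := by
  rw [← hP.adjoint_eq, ← adjoint_comp, map_eq_zero_iff _ adjoint.injective, hP.adjoint_eq]

theorem ContinuousLinearMap.eq_zero_of_comp_denseRange_eq_zero [TopologicalSpace G]
    {f : F →L[𝕜] E} {g : G → F} (hg : DenseRange g) (hfg : f ∘ g = 0) : f = 0 := by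
  ext x
  exact congrFun (hg.equalizer f.continuous continuous_const hfg) x

end

theorem stmt0_general
    {H K : Type*} [NormedAddCommGroup H] [InnerProductSpace ℂ H] [CompleteSpace H]
    [NormedAddCommGroup K] [InnerProductSpace ℂ K] [CompleteSpace K]
    (A B : H →L[ℂ] K) (C : H →L[ℂ] K)
    (hCdense : DenseRange C)
    (hwd : ∀ x x' : K →L[ℂ] K,
      (adjoint A) ∘L x ∘L C = (adjoint A) ∘L x' ∘L C →
      (adjoint B) ∘L x ∘L C = (adjoint B) ∘L x' ∘L C) :
    (LinearMap.range (B : H →ₗ[ℂ] K)).topologicalClosure ≤ (LinearMap.range (A : H →ₗ[ℂ] K)).topologicalClosure := by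
  set S := (LinearMap.range (A : H →ₗ[ℂ] K)).topologicalClosure
  have hS : IsClosed (S : Set K) := Submodule.isClosed_topologicalClosure _
  have : CompleteSpace S := hS.completeSpace_coe
  set Q := Sᗮ.starProjection
  have hQ : IsSelfAdjoint Q := isSelfAdjoint_starProjection Sᗮ
  have hAQ : adjoint A ∘L Q = 0 := (adjoint_comp_eq_zero_iff hQ A).2 <|
    (S.starProjection_orthogonal_comp_eq_zero_iff A).2 (Submodule.le_topologicalClosure _)
  have hBQC : adjoint B ∘L Q ∘L C = 0 := by
    simpa using hwd Q 0 (by rw [← comp_assoc, hAQ]; simp)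
  have hBQ : adjoint B ∘L Q = 0 :=
    eq_zero_of_comp_denseRange_eq_zero hCdense (congrArg (⇑) ((comp_assoc _ _ _).trans hBQC))
  have hrange : LinearMap.range (B : H →ₗ[ℂ] K) ≤ S :=
    (S.starProjection_orthogonal_comp_eq_zero_iff B).1 ((adjoint_comp_eq_zero_iff hQ B).1 hBQ)
  exact Submodule.topologicalClosure_minimal _ hrange hS

/-- If the map `Ψ (A* ∘ x ∘ C) = B* ∘ x ∘ C` (with `C` nonzero of dense range)
is well defined and closable in the weak operator topology, then
`closure (range B) ⊆ closure (range A)`. -/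
theorem stmt0
    {H K : Type*} [NormedAddCommGroup H] [InnerProductSpace ℂ H] [CompleteSpace H]
    [NormedAddCommGroup K] [InnerProductSpace ℂ K] [CompleteSpace K]
    (A B : H →L[ℂ] K) (C : H →L[ℂ] K)
    (hC0 : C ≠ 0) (hCdense : DenseRange C)
    (hwd : ∀ x x' : K →L[ℂ] K,
      (adjoint A) ∘L x ∘L C = (adjoint A) ∘L x' ∘L C →
      (adjoint B) ∘L x ∘L C = (adjoint B) ∘L x' ∘L C)
    (hclosable : ∀ (x : ℕ → K →L[ℂ] K) (y : H →L[ℂ] H),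
      (∀ ξ η : H, Tendsto (fun n => (inner ℂ (((adjoint A) ∘L x n ∘L C) ξ) η : ℂ))
          atTop (𝓝 0)) →
      (∀ ξ η : H, Tendsto (fun n => (inner ℂ (((adjoint B) ∘L x n ∘L C) ξ) η : ℂ))
          atTop (𝓝 (inner ℂ (y ξ) η))) →
      y = 0) :
    (LinearMap.range (B : H →ₗ[ℂ] K)).topologicalClosure ≤ (LinearMap.range (A : H →ₗ[ℂ] K)).topologicalClosure :=
  stmt0_general A B C hCdense hwd
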